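/- Let η be a constant symmetric nondegenerate N×N matrix, K = η∂_x, and let u^α ↦ ũ^α(u) be a Miura transformation satisfying ∂ũ^α(u)/∂u^1 = δ^{α,1}. Then the transformed operator K_ũ, with (K_ũ)^{αβ} = Σ_{p,q≥0} (∂ũ^α(u)/∂u^μ_p) ∂_x^p ∘ η^{μν}∂_x ∘ (−∂_x)^q ∘ (∂ũ^β(u)/∂u^ν_q), is independent of ũ^1: all of its coefficients, written as differential polynomials in the variables ũ, are annihilated by ∂/∂ũ^1. -/

import Mathlib

/-!
Common formal framework for the theory of differential polynomials, local
functionals and tau-structures, following Buryak–Dubrovin–Guéré–Rossi.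

Variables of the algebra of differential polynomials: `Sum.inl (α, i)` stands
for `u^α_i` (with `u^α = u^α_0`) and `Sum.inr ()` stands for `ε`.  The paper's
index `1` (the unit direction) corresponds to `(0 : Fin N)` here.
-/

/-- The variables of the algebra of differential polynomials. -/
abbrev DVar (N : ℕ) : Type := (Fin N × ℕ) ⊕ Unit

/-- The ring `Â_N` of (extended) differential polynomials, realized inside the
ring of formal power series in the variables `u^α_i` and `ε`. -/
abbrev DP (N : ℕ) : Type := MvPowerSeries (DVar N) ℂ

namespace DP

variable {N : ℕ}

/-- Coefficient of a monomial. -/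
noncomputable def co (f : DP N) (m : DVar N →₀ ℕ) : ℂ :=
  MvPowerSeries.coeff m f

/-- Build a power series from its coefficients. -/
def ofCo (F : (DVar N →₀ ℕ) → ℂ) : DP N := F

/-- The variable `u^α_i`. -/
noncomputable def uv (α : Fin N) (i : ℕ) : DP N :=
  MvPowerSeries.X (Sum.inl (α, i))

/-- The variable `ε`. -/
noncomputable def eps : DP N := MvPowerSeries.X (Sum.inr ())

/-- The partial derivative `∂/∂v` with respect to one of the variables. -/
noncomputable def pd (v : DVar N) (f : DP N) : DP N :=
  ofCo fun m => ((m v : ℂ) + 1) * co f (m + Finsupp.single v 1)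

/-- The spatial derivative `∂_x = Σ_{α,i} u^α_{i+1} ∂/∂u^α_i`. -/
noncomputable def dx (f : DP N) : DP N :=
  ofCo fun m =>
    ∑ v ∈ m.support,
      (match v with
        | Sum.inl (α, i + 1) =>
            co (pd (Sum.inl (α, i)) f) (m - Finsupp.single (Sum.inl (α, i + 1)) 1)
        | _ => (0 : ℂ))

/-- The variational derivative `δ/δu^μ = Σ_{i≥0} (−∂_x)^i ∘ ∂/∂u^μ_i`. -/
noncomputable def vd (μ : Fin N) (f : DP N) : DP N :=
  ofCo fun m => ∑ᶠ i : ℕ, ((-1 : ℂ) ^ i) * co (dx^[i] (pd (Sum.inl (μ, i)) f)) m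

/-- The weighted degree of a monomial: `deg u^α_i = i`, `deg ε = −1`. -/
noncomputable def wdeg (m : DVar N →₀ ℕ) : ℤ :=
  ∑ v ∈ m.support,
    (match v with
      | Sum.inl (_, i) => (i : ℤ)
      | Sum.inr _ => (-1 : ℤ)) * (m v : ℤ)

/-- Degree-`k` homogeneity (membership in `Â_N^{[k]}`). -/
def IsHomog (k : ℤ) (f : DP N) : Prop :=
  ∀ m, co f m ≠ 0 → wdeg m = k

/-- Being a constant, i.e. an element of `ℂ[[ε]]`. -/
def IsConst (f : DP N) : Prop :=
  ∀ m, co f m ≠ 0 → ∀ v ∈ m.support, v = Sum.inr ()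

/-- Vanishing of the evaluation at `u^*_* = 0`. -/
def VanishAtU0 (f : DP N) : Prop :=
  ∀ k : ℕ, co f (Finsupp.single (Sum.inr ()) k) = 0

/-- Being a genuine differential polynomial: in each ε-degree at most `e`,
polynomiality (bounded degree, boundedly many variables) in the jet
variables `u^α_i`, `i ≥ 1`. -/
def IsDiffPoly (f : DP N) : Prop :=
  ∀ e : ℕ, ∃ D : ℕ, ∀ m, co f m ≠ 0 → m (Sum.inr ()) ≤ e →
    ((∑ v ∈ m.support,
        (match v with
          | Sum.inl (_, _ + 1) => m v
          | _ => 0)) ≤ D) ∧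
      ∀ (α : Fin N) (i : ℕ), D < i → m (Sum.inl (α, i)) = 0

/-- The submodule of constants `ℂ[[ε]] ⊆ Â_N`. -/
noncomputable def constSub (N : ℕ) : Submodule ℂ (DP N) where
  carrier := {f | IsConst f}
  add_mem' := by
    intro f g hf hg m hm
    have hco : co (f + g) m = co f m + co g m := map_add _ _ _
    by_cases h1 : co f m = 0
    · have h2 : co g m ≠ 0 := by
        intro h2; exact hm (by rw [hco, h1, h2, add_zero])
      exact hg m h2
    · exact hf m h1
  zero_mem' := by
    intro m hm
    exact (hm (map_zero (MvPowerSeries.coeff (R := ℂ) m))).elim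
  smul_mem' := by
    intro c f hf m hm
    have hne : co f m ≠ 0 := by
      intro h
      apply hm
      have hsm : co (c • f) m = c * co f m := by
        simp [co]
      rw [hsm, h, mul_zero]
    exact hf m hne

/-- The submodule `ℂ[[ε]] + ∂_x(Â_N)` by which one quotients to get local
functionals. -/
noncomputable def lfSub (N : ℕ) : Submodule ℂ (DP N) :=
  constSub N ⊔ Submodule.span ℂ (Set.range (dx : DP N → DP N))

/-- The space `Λ̂_N` of local functionals. -/
abbrev LF (N : ℕ) := DP N ⧸ lfSub N

/-- The projection `f ↦ ∫ f dx`. -/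
noncomputable def intg : DP N →ₗ[ℂ] LF N := (lfSub N).mkQ

/-- A choice of density for a local functional. -/
noncomputable def rep (h : LF N) : DP N :=
  (Submodule.Quotient.mk_surjective (lfSub N) h).choose

/-- The variational derivative `δ/δu^μ` of a local functional. -/
noncomputable def vdQ (μ : Fin N) (h : LF N) : DP N := vd μ (rep h)

/-- The partial derivative `∂/∂v` of a local functional. -/
noncomputable def pdQ (v : DVar N) (h : LF N) : LF N := intg (pd v (rep h))

/-- The degree-`k` local functionals `Λ̂_N^{[k]}`. -/
noncomputable def LFHomog (N : ℕ) (k : ℤ) : Set (LF N) :=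
  intg '' {f : DP N | IsHomog k f ∧ IsDiffPoly f}

/-- The operator `K = η ∂_x` applied to a tuple of differential polynomials. -/
noncomputable def etaAp (η : Matrix (Fin N) (Fin N) ℂ) (α : Fin N)
    (g : Fin N → DP N) : DP N :=
  ∑ ν : Fin N, η α ν • dx (g ν)

/-- The bracket `{f̄, ḡ}_{η∂_x}` of local functionals. -/
noncomputable def lfbEta (η : Matrix (Fin N) (Fin N) ℂ) (f g : LF N) : LF N :=
  intg (∑ μ : Fin N, vdQ μ f * etaAp η μ fun ν => vdQ ν g)

/-- The bracket `{f, h̄}_{η∂_x}` of a differential polynomial with a local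
functional. -/
noncomputable def pbEta (η : Matrix (Fin N) (Fin N) ℂ) (f : DP N) (h : LF N) : DP N :=
  ofCo fun m => ∑ γ : Fin N, ∑ᶠ n : ℕ,
    co (pd (Sum.inl (γ, n)) f * dx^[n] (etaAp η γ fun μ => vdQ μ h)) m

/-- A general operator `K^{γν} = Σ_j K^{γν}_j ∂_x^j` applied to a tuple of
differential polynomials. -/
noncomputable def Kap (K : Fin N → Fin N → ℕ → DP N) (γ : Fin N)
    (g : Fin N → DP N) : DP N :=
  ∑ ν : Fin N, ofCo fun m => ∑ᶠ j : ℕ, co (K γ ν j * dx^[j] (g ν)) m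

/-- The bracket `{f̄, ḡ}_K` of local functionals. -/
noncomputable def lfbK (K : Fin N → Fin N → ℕ → DP N) (f g : LF N) : LF N :=
  intg (∑ μ : Fin N, vdQ μ f * Kap K μ fun ν => vdQ ν g)

/-- The bracket `{f, h̄}_K` of a differential polynomial with a local
functional. -/
noncomputable def pbK (K : Fin N → Fin N → ℕ → DP N) (f : DP N) (h : LF N) : DP N :=
  ofCo fun m => ∑ γ : Fin N, ∑ᶠ n : ℕ,
    co (pd (Sum.inl (γ, n)) f * dx^[n] (Kap K γ fun μ => vdQ μ h)) m

/-- Being a hamiltonian operator. -/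
structure IsHamOp (K : Fin N → Fin N → ℕ → DP N) : Prop where
  finite : ∀ γ ν, ∃ J : ℕ, ∀ j, J ≤ j → K γ ν j = 0
  deg : ∀ (γ ν : Fin N) (j : ℕ), IsHomog (1 - (j : ℤ)) (K γ ν j)
  poly : ∀ γ ν j, IsDiffPoly (K γ ν j)
  antisym : ∀ f g : LF N, lfbK K f g = -lfbK K g f
  jacobi : ∀ f g h : LF N,
    lfbK K (lfbK K f g) h + lfbK K (lfbK K g h) f + lfbK K (lfbK K h f) g = 0

/-- A hamiltonian hierarchy: a hamiltonian operator together with pairwise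
commuting Hamiltonians `h̄_{β,q} ∈ Λ̂^{[0]}_N` such that `h̄_{1,0}` generates the
spatial translations. -/
structure IsHierarchy [NeZero N] (K : Fin N → Fin N → ℕ → DP N)
    (H : Fin N → ℕ → LF N) : Prop where
  ham : IsHamOp K
  mem : ∀ β q, H β q ∈ LFHomog N 0
  comm : ∀ β q γ p, lfbK K (H β q) (H γ p) = 0
  transl : ∀ α, Kap K α (fun μ => vdQ μ (H 0 0)) = uv α 1

/-- A tau-structure for a hamiltonian hierarchy.  Here `h β q` denotes the
tau-symmetric density `h_{β,q-1}` (an index shift by one). -/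
structure IsTauStructure [NeZero N] (K : Fin N → Fin N → ℕ → DP N)
    (H : Fin N → ℕ → LF N) (h : Fin N → ℕ → DP N) : Prop where
  mem : ∀ β q, IsHomog 0 (h β q) ∧ IsDiffPoly (h β q)
  casimir : ∀ β α, Kap K α (fun μ => vdQ μ (intg (h β 0))) = 0
  indep : LinearIndependent ℂ fun β : Fin N => intg (h β 0)
  nondeg : Matrix.det (Matrix.of fun α β : Fin N => co (K α β 1) 0) ≠ 0
  dens : ∀ β q, intg (h β (q + 1)) = H β q
  tausym : ∀ α β p q, pbK K (h α p) (H β q) = pbK K (h β q) (H α p)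

end DP



namespace DP

variable {N : ℕ}

/-- The transformed operator `(K_ũ)^{αβ}` for `K = η∂_x`, acting on
differential polynomials:
`Σ_{p,q} (∂ũ^α/∂u^μ_p) ∂_x^p ∘ η^{μν}∂_x ∘ (−∂_x)^q ∘ (∂ũ^β/∂u^ν_q)`. -/
noncomputable def miuraEta (η : Matrix (Fin N) (Fin N) ℂ) (ut : Fin N → DP N)
    (α β : Fin N) (g : DP N) : DP N :=
  ofCo fun m => ∑ᶠ p : ℕ, ∑ᶠ q : ℕ,
    co (∑ μ : Fin N, ∑ ν : Fin N,
      pd (Sum.inl (μ, p)) (ut α) *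
        dx^[p] (η μ ν •
          dx (((-1 : ℂ) ^ q) • dx^[q] (pd (Sum.inl (ν, q)) (ut β) * g)))) m

end DP

/-!
`∂_x = Σ u^α_{i+1} ∂/∂u^α_i` never produces a variable `u^γ_0`, so `∂/∂u^γ` commutes with `∂_x`.
If moreover every `∂ũ^α/∂u^γ` is a constant, then `∂/∂u^γ` kills each coefficient
`∂ũ^α/∂u^μ_p` of `K_ũ`, since partial derivatives commute. So `∂/∂u^γ` passes through all the
ingredients of `K_ũ` (these coefficients, `∂_x` and the constant matrix `η`) and acts on the
argument alone.
For `γ = 1` this is the claim, because `∂ũ^α/∂u^1 = δ^{α,1}` makes `∂/∂ũ^1` and `∂/∂u^1` agree.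
-/

namespace DP

variable {N : ℕ}

open MvPowerSeries

theorem pd_eq_pderiv (v : DVar N) : pd v = pderiv ℂ v := by
  funext f
  ext m
  rw [coeff_pderiv, mul_comm]
  rfl

theorem co_pd (v : DVar N) (f : DP N) (m : DVar N →₀ ℕ) :
    co (pd v f) m = ((m v : ℂ) + 1) * co f (m + Finsupp.single v 1) := rfl

theorem pd_sum {ι : Type*} (v : DVar N) (s : Finset ι) (f : ι → DP N) :
    pd v (∑ i ∈ s, f i) = ∑ i ∈ s, pd v (f i) := by
  rw [pd_eq_pderiv]
  exact map_sum _ _ _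

theorem pd_smul (v : DVar N) (c : ℂ) (f : DP N) : pd v (c • f) = c • pd v f := by
  rw [pd_eq_pderiv]
  exact Derivation.map_smul _ _ _

theorem pd_mul_of_pd_eq_zero {v : DVar N} {f : DP N} (hf : pd v f = 0) (g : DP N) :
    pd v (f * g) = f * pd v g := by
  rw [pd_eq_pderiv, Derivation.leibniz, ← pd_eq_pderiv, hf, smul_zero, add_zero, smul_eq_mul]

theorem pd_C (v : DVar N) (c : ℂ) : pd v (C c) = 0 := by
  rw [pd_eq_pderiv, pderiv_C]

theorem pd_comm (v w : DVar N) (f : DP N) : pd v (pd w f) = pd w (pd v f) := by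
  ext m
  change co (pd v _) m = co (pd w _) m
  rw [co_pd, co_pd, co_pd, co_pd, add_right_comm m (Finsupp.single v 1)]
  rcases eq_or_ne v w with rfl | hvw
  · rfl
  · simp only [Finsupp.add_apply, Finsupp.single_eq_of_ne hvw, Finsupp.single_eq_of_ne hvw.symm,
      add_zero]
    ring

theorem pd_dx_comm {w : DVar N} (hw : ∀ α i, w ≠ Sum.inl (α, i + 1)) (f : DP N) :
    pd w (dx f) = dx (pd w f) := by
  classical
  ext m
  change ((m w : ℂ) + 1) * ∑ v ∈ (m + Finsupp.single w 1).support, _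
    = ∑ v ∈ m.support, _
  have hsupp : m.support ⊆ (m + Finsupp.single w 1).support :=
    Finsupp.support_mono le_self_add
  rw [Finset.mul_sum, ← Finset.sum_subset hsupp]
  · refine Finset.sum_congr rfl fun v hv => ?_
    rcases v with ⟨α, _ | i⟩ | _
    · exact mul_zero _
    · have hvw : Sum.inl (α, i + 1) ≠ w := (hw α i).symm
      have hle : Finsupp.single (Sum.inl (α, i + 1)) 1 ≤ m :=
        Finsupp.single_le_iff.mpr (Nat.one_le_iff_ne_zero.mpr (Finsupp.mem_support_iff.mp hv))
      change _ = co (pd _ (pd w f)) _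
      rw [pd_comm _ w, co_pd w, Finsupp.tsub_apply, Finsupp.single_eq_of_ne' hvw, Nat.sub_zero,
        tsub_add_eq_add_tsub hle]
    · exact mul_zero _
  · intro v hvn hvm
    have hv : v = w := by
      by_contra hvw
      rw [Finsupp.mem_support_iff, Finsupp.add_apply, Finsupp.single_eq_of_ne hvw, add_zero] at hvn
      exact hvm (Finsupp.mem_support_iff.mpr hvn)
    subst hv
    rcases v with ⟨α, _ | i⟩ | _
    · exact mul_zero _
    · exact absurd rfl (hw α i)
    · exact mul_zero _

theorem pd_iterate_dx_comm {w : DVar N} (hw : ∀ α i, w ≠ Sum.inl (α, i + 1)) (p : ℕ)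
    (f : DP N) : pd w (dx^[p] f) = dx^[p] (pd w f) := by
  induction p generalizing f with
  | zero => rfl
  | succ p ih => rw [Function.iterate_succ_apply, Function.iterate_succ_apply, ih, pd_dx_comm hw]

noncomputable def miuraEtaTerm (η : Matrix (Fin N) (Fin N) ℂ) (ut : Fin N → DP N)
    (α β : Fin N) (p q : ℕ) (g : DP N) : DP N :=
  ∑ μ : Fin N, ∑ ν : Fin N,
    pd (Sum.inl (μ, p)) (ut α) *
      dx^[p] (η μ ν • dx (((-1 : ℂ) ^ q) • dx^[q] (pd (Sum.inl (ν, q)) (ut β) * g)))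

theorem co_miuraEta (η : Matrix (Fin N) (Fin N) ℂ) (ut : Fin N → DP N) (α β : Fin N)
    (g : DP N) (m : DVar N →₀ ℕ) :
    co (miuraEta η ut α β g) m = ∑ᶠ p : ℕ, ∑ᶠ q : ℕ, co (miuraEtaTerm η ut α β p q g) m :=
  rfl

section CommutingVariable

variable {w : DVar N} {ut : Fin N → DP N}

theorem pd_miuraEtaTerm (hw : ∀ α i, w ≠ Sum.inl (α, i + 1))
    (hut : ∀ γ, ∃ c : ℂ, pd w (ut γ) = C c) (η : Matrix (Fin N) (Fin N) ℂ) (α β : Fin N)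
    (p q : ℕ) (g : DP N) :
    pd w (miuraEtaTerm η ut α β p q g) = miuraEtaTerm η ut α β p q (pd w g) := by
  have hcoef : ∀ γ μ k, pd w (pd (Sum.inl (μ, k)) (ut γ)) = 0 := fun γ μ k => by
    obtain ⟨c, hc⟩ := hut γ
    rw [pd_comm, hc, pd_C]
  simp only [miuraEtaTerm, pd_sum, pd_mul_of_pd_eq_zero (hcoef _ _ _), pd_iterate_dx_comm hw,
    pd_smul, pd_dx_comm hw]

theorem pd_miuraEta (hw : ∀ α i, w ≠ Sum.inl (α, i + 1))
    (hut : ∀ γ, ∃ c : ℂ, pd w (ut γ) = C c) (η : Matrix (Fin N) (Fin N) ℂ) (α β : Fin N)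
    (g : DP N) :
    pd w (miuraEta η ut α β g) = miuraEta η ut α β (pd w g) := by
  ext m
  change co (pd w _) m = co _ m
  rw [co_pd, co_miuraEta, co_miuraEta, mul_finsum]
  refine finsum_congr fun p => ?_
  rw [mul_finsum]
  refine finsum_congr fun q => ?_
  rw [← co_pd, pd_miuraEtaTerm hw hut]

end CommutingVariable

end DP

open DP in
theorem statement8_general (N : ℕ) [NeZero N] (η : Matrix (Fin N) (Fin N) ℂ)
    (ut : Fin N → DP N)
    (hu1 : ∀ α : Fin N,
      pd (Sum.inl (0, 0)) (ut α) = if α = 0 then 1 else 0) :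
    ∀ (α β : Fin N) (g : DP N),
      pd (Sum.inl (0, 0)) (miuraEta η ut α β g)
        = miuraEta η ut α β (pd (Sum.inl (0, 0)) g) := by
  have hw : ∀ (α : Fin N) i, (Sum.inl (0, 0) : DVar N) ≠ Sum.inl (α, i + 1) := by simp
  have hut (γ : Fin N) : ∃ c : ℂ, pd (Sum.inl (0, 0)) (ut γ) = MvPowerSeries.C c :=
    ⟨if γ = 0 then 1 else 0, by rw [hu1]; split_ifs <;> simp⟩
  exact pd_miuraEta hw hut η

open DP in
/-- independence of `ũ^1` of the transformed operator.  Let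
`K = η∂_x` with `η` a constant symmetric nondegenerate matrix and let
`u^α ↦ ũ^α(u)` be a Miura transformation with `∂ũ^α/∂u^1 = δ^{α,1}`.  Then the
transformed operator `K_ũ` is independent of `ũ^1`: all of its coefficients
are annihilated by `∂/∂ũ^1`.  (Under the hypothesis `∂ũ^α/∂u^1 = δ^{α,1}`, the
derivations `∂/∂ũ^1` and `∂/∂u^1` coincide, and since `∂/∂u^1` commutes with
`∂_x`, annihilation of all coefficients is equivalent to the operator
commuting with `∂/∂u^1`.) -/
theorem statement8 (N : ℕ) [NeZero N] (η : Matrix (Fin N) (Fin N) ℂ)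
    (hsym : η.IsSymm) (hnd : IsUnit η.det)
    (ut : Fin N → DP N)
    (hmiura : ∀ α, IsHomog 0 (ut α) ∧ IsDiffPoly (ut α))
    (hval : ∀ α, co (ut α) 0 = 0)
    (hjac : Matrix.det
      (Matrix.of fun α β : Fin N => co (pd (Sum.inl (β, 0)) (ut α)) 0) ≠ 0)
    (hu1 : ∀ α : Fin N,
      pd (Sum.inl (0, 0)) (ut α) = if α = 0 then 1 else 0) :
    ∀ (α β : Fin N) (g : DP N),
      pd (Sum.inl (0, 0)) (miuraEta η ut α β g)
        = miuraEta η ut α β (pd (Sum.inl (0, 0)) g) :=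
  statement8_general N η ut hu1
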